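/- arXiv:1106.4456 — 4 statements merged into one kernel-verified Lean document; each statement's English description precedes it below -/
import Mathlib

section
/- For discrete functions f, g on {0,...,N+1}, h·Σ_{j=1}^{N} g_j (∂_h f)_j = h·Σ_{j=0}^{N} (m_h^+ g)_j (∂_h^+ f)_j − (h/2) g_0 (∂_h^+ f)_0 − (h/2) g_{N+1} (∂_h^- f)_{N+1}. -/
theorem Finset.sum_Icc_mul_centralDiff {R : Type*} [CommRing R] (f g : ℕ → R) (N : ℕ) :
    ∑ j ∈ Icc 1 N, g j * (f (j + 1) - f (j - 1)) =
      ∑ j ∈ range (N + 1), (g (j + 1) + g j) * (f (j + 1) - f j)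
        - g 0 * (f 1 - f 0) - g (N + 1) * (f (N + 1) - f N) := by
  induction N with
  | zero => simp; ring
  | succ n ih =>
    rw [sum_Icc_succ_top (by omega), sum_range_succ, ih, Nat.add_sub_cancel]
    ring

theorem stmt10_general (N : ℕ) (h : ℝ) (f g : ℕ → ℝ) :
    h * ∑ j ∈ Finset.Icc 1 N, g j * ((f (j + 1) - f (j - 1)) / (2 * h)) =
      h * ∑ j ∈ Finset.range (N + 1), ((g (j + 1) + g j) / 2) * ((f (j + 1) - f j) / h)
        - (h / 2) * g 0 * ((f 1 - f 0) / h)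
        - (h / 2) * g (N + 1) * ((f (N + 1) - f N) / h) := by
  rcases eq_or_ne h 0 with rfl | hh
  · simp
  simp only [Finset.mul_sum]
  have central_term (j : ℕ) : h * (g j * ((f (j + 1) - f (j - 1)) / (2 * h))) =
      g j * (f (j + 1) - f (j - 1)) / 2 := by field_simp
  have forward_term (j : ℕ) : h * ((g (j + 1) + g j) / 2 * ((f (j + 1) - f j) / h)) =
      (g (j + 1) + g j) * (f (j + 1) - f j) / 2 := by field_simp
  simp only [central_term, forward_term, ← Finset.sum_div, Finset.sum_Icc_mul_centralDiff]
  field_simp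

theorem stmt10 (N : ℕ) (h : ℝ) (hh : h = 1 / (N + 1)) (f g : ℕ → ℝ) :
    h * ∑ j ∈ Finset.Icc 1 N, g j * ((f (j + 1) - f (j - 1)) / (2 * h)) =
      h * ∑ j ∈ Finset.range (N + 1), ((g (j + 1) + g j) / 2) * ((f (j + 1) - f j) / h)
        - (h / 2) * g 0 * ((f 1 - f 0) / h)
        - (h / 2) * g (N + 1) * ((f (N + 1) - f N) / h) :=
  stmt10_general N h f g
end

section
/- For discrete functions v, g on {0,...,N+1} with v_0 = v_{N+1} = 0, one has 2h·Σ_{j=1}^{N} g_j v_j (∂_h v)_j = − h·Σ_{j=1}^{N} v_j² (∂_h g)_j + (h³/2)·Σ_{j=0}^{N} ((∂_h^+ v)_j)² (∂_h^+ g)_j. -/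
/-!
Discrete summation by parts. Expanding `(v_{j+1} - v_j)² (g_{j+1} - g_j)` and summing over
`j = 0, …, N`, the terms `v_{j+1}² g_{j+1} - v_j² g_j` telescope, and after shifting the index in
the remaining terms the boundary values `v_0 = v_{N+1} = 0` leave exactly
`Σ_{j=1}^N (2 g_j v_j (v_{j+1} - v_{j-1}) + v_j² (g_{j+1} - g_{j-1}))`. Dividing by powers of `h`
gives the identity for the difference quotients.
-/

open Finset

noncomputable def centralDiff (h : ℝ) (v : ℕ → ℝ) (j : ℕ) : ℝ := (v (j + 1) - v (j - 1)) / (2 * h)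

noncomputable def forwardDiff (h : ℝ) (v : ℕ → ℝ) (j : ℕ) : ℝ := (v (j + 1) - v j) / h

theorem sum_range_sq_sub_mul_sub_eq (v g : ℕ → ℝ) (hv0 : v 0 = 0) (n : ℕ) :
    ∑ j ∈ range (n + 1), (v (j + 1) - v j) ^ 2 * (g (j + 1) - g j) =
      ∑ j ∈ Icc 1 n, (2 * (g j * v j * (v (j + 1) - v (j - 1))) + v j ^ 2 * (g (j + 1) - g (j - 1)))
        + v (n + 1) * (v (n + 1) * (g (n + 1) - g n) - 2 * v n * g (n + 1)) := by
  induction n with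
  | zero => rw [zero_add, sum_range_one, Icc_eq_empty_of_lt one_pos, sum_empty, hv0]; ring
  | succ n ih =>
    rw [sum_range_succ, ih, sum_Icc_succ_top (by omega), Nat.add_sub_cancel]
    ring

theorem two_mul_sum_mul_centralDiff_eq {h : ℝ} (hh : h ≠ 0) (N : ℕ) (v g : ℕ → ℝ)
    (hv0 : v 0 = 0) (hvN : v (N + 1) = 0) :
    2 * (h * ∑ j ∈ Icc 1 N, g j * v j * centralDiff h v j) =
      -(h * ∑ j ∈ Icc 1 N, v j ^ 2 * centralDiff h g j)
        + h ^ 3 / 2 * ∑ j ∈ range (N + 1), forwardDiff h v j ^ 2 * forwardDiff h g j := by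
  have parts := sum_range_sq_sub_mul_sub_eq v g hv0 N
  rw [hvN, zero_mul, add_zero, sum_add_distrib, ← mul_sum] at parts
  simp only [forwardDiff, div_pow, div_mul_div_comm, ← pow_succ]
  simp only [centralDiff, ← mul_div_assoc, ← sum_div]
  field_simp
  linear_combination (-h ^ 3) * parts

theorem stmt11 (N : ℕ) (h : ℝ) (hh : h = 1 / (N + 1)) (v g : ℕ → ℝ)
    (hv0 : v 0 = 0) (hvN : v (N + 1) = 0) :
    2 * (h * ∑ j ∈ Finset.Icc 1 N, g j * v j * ((v (j + 1) - v (j - 1)) / (2 * h))) =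
      - (h * ∑ j ∈ Finset.Icc 1 N, (v j) ^ 2 * ((g (j + 1) - g (j - 1)) / (2 * h)))
        + (h ^ 3 / 2) * ∑ j ∈ Finset.range (N + 1),
            ((v (j + 1) - v j) / h) ^ 2 * ((g (j + 1) - g j) / h) := by
  exact two_mul_sum_mul_centralDiff_eq (by rw [hh]; positivity) N v g hv0 hvN
end

section
/- For discrete functions v, g on {0,...,N+1} with v_0 = v_{N+1} = 0, one has h·Σ_{j=1}^{N} g_j (Δ_h v)_j (∂_h v)_j = −(h/2)·Σ_{j=0}^{N} ((∂_h^+ v)_j)² (∂_h^+ g)_j + (1/2)((∂_h^- v)_{N+1})² g_{N+1} − (1/2)((∂_h^+ v)_0)² g_0. -/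
lemma aux14 (h : ℝ) (hne : h ≠ 0) (v g : ℕ → ℝ) : ∀ N : ℕ,
    h * ∑ j ∈ Finset.Icc 1 N,
        g j * ((v (j + 1) - 2 * v j + v (j - 1)) / h ^ 2) * ((v (j + 1) - v (j - 1)) / (2 * h)) =
      - ((h / 2) * ∑ j ∈ Finset.range (N + 1), ((v (j + 1) - v j) / h) ^ 2 * ((g (j + 1) - g j) / h))
        + (1 / 2) * ((v (N + 1) - v N) / h) ^ 2 * g (N + 1)
        - (1 / 2) * ((v 1 - v 0) / h) ^ 2 * g 0 := by
  intro N
  induction N with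
  | zero =>
    simp [Finset.Icc_self, Finset.sum_range_succ]
    field_simp
    ring
  | succ n ih =>
    rw [Finset.sum_Icc_succ_top (by omega : 1 ≤ n + 1), Finset.sum_range_succ]
    simp only [Nat.add_sub_cancel]
    rw [mul_add, ih]
    field_simp
    ring

theorem stmt14 (N : ℕ) (h : ℝ) (hh : h = 1 / (N + 1)) (v g : ℕ → ℝ)
    (hv0 : v 0 = 0) (hvN : v (N + 1) = 0) :
    h * ∑ j ∈ Finset.Icc 1 N,
        g j * ((v (j + 1) - 2 * v j + v (j - 1)) / h ^ 2) * ((v (j + 1) - v (j - 1)) / (2 * h)) =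
      - ((h / 2) * ∑ j ∈ Finset.range (N + 1), ((v (j + 1) - v j) / h) ^ 2 * ((g (j + 1) - g j) / h))
        + (1 / 2) * ((v (N + 1) - v N) / h) ^ 2 * g (N + 1)
        - (1 / 2) * ((v 1 - v 0) / h) ^ 2 * g 0 := by
  have hne : h ≠ 0 := by
    rw [hh]; positivity
  exact aux14 h hne v g N
end

section
/- Discrete Poincaré inequality: for every discrete function z on {0,...,N+1} with z_0 = z_{N+1} = 0, one has h·Σ_{j=1}^{N} z_j² ≤ 4·h·Σ_{j=0}^{N} ((∂_h^+ z)_j)², where (∂_h^+ z)_j = (z_{j+1}-z_j)/h. -/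
/-!
Writing `z j` as the telescoping sum of the increments `z (i + 1) - z i` for `i < j` and
applying Cauchy–Schwarz gives `z j ^ 2 ≤ N * ∑ (z (i + 1) - z i) ^ 2` for `j ≤ N`. Summing over
the `N` interior nodes, `h * ∑ z j ^ 2 ≤ h N² ∑ (z (i + 1) - z i) ^ 2`, while the right-hand side
equals `4 (N + 1) ∑ (z (i + 1) - z i) ^ 2`, and `h N² = N² / (N + 1) ≤ 4 (N + 1)`.
-/

open Finset

section DiscretePoincare

variable {α : Type*} [CommRing α] [LinearOrder α] [IsStrictOrderedRing α]

lemma sq_le_mul_sum_sq_sub_of_eq_zero {z : ℕ → α} (hz0 : z 0 = 0) (j : ℕ) :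
    z j ^ 2 ≤ j * ∑ i ∈ range j, (z (i + 1) - z i) ^ 2 := by
  have htel : z j = ∑ i ∈ range j, (z (i + 1) - z i) := by
    rw [sum_range_sub, hz0, sub_zero]
  simpa [htel] using sq_sum_le_card_mul_sum_sq (s := range j) (f := fun i ↦ z (i + 1) - z i)

lemma sum_Icc_sq_le_of_eq_zero {z : ℕ → α} (hz0 : z 0 = 0) (N : ℕ) :
    ∑ j ∈ Icc 1 N, z j ^ 2 ≤ N ^ 2 * ∑ i ∈ range N, (z (i + 1) - z i) ^ 2 := by
  have hbound (j : ℕ) (hj : j ∈ Icc 1 N) :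
      z j ^ 2 ≤ N * ∑ i ∈ range N, (z (i + 1) - z i) ^ 2 := by
    have hjN : j ≤ N := (mem_Icc.1 hj).2
    calc z j ^ 2 ≤ j * ∑ i ∈ range j, (z (i + 1) - z i) ^ 2 :=
          sq_le_mul_sum_sq_sub_of_eq_zero hz0 j
      _ ≤ N * ∑ i ∈ range N, (z (i + 1) - z i) ^ 2 := by
          gcongr
  calc ∑ j ∈ Icc 1 N, z j ^ 2 ≤ ∑ j ∈ Icc 1 N, N * ∑ i ∈ range N, (z (i + 1) - z i) ^ 2 :=
        sum_le_sum hbound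
    _ = N ^ 2 * ∑ i ∈ range N, (z (i + 1) - z i) ^ 2 := by
        rw [sum_const, Nat.card_Icc, nsmul_eq_mul]; push_cast; ring

end DiscretePoincare

theorem stmt16_general (N : ℕ) (h : ℝ) (hh : h = 1 / (N + 1)) (z : ℕ → ℝ)
    (hz0 : z 0 = 0) :
    h * ∑ j ∈ Finset.Icc 1 N, (z j) ^ 2 ≤
      4 * (h * ∑ j ∈ Finset.range (N + 1), ((z (j + 1) - z j) / h) ^ 2) := by
  set S := ∑ i ∈ range (N + 1), (z (i + 1) - z i) ^ 2
  have hS : 0 ≤ S := sum_nonneg fun _ _ ↦ sq_nonneg _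
  have hN : (0 : ℝ) < N + 1 := by positivity
  have hsum : ∑ j ∈ Icc 1 N, z j ^ 2 ≤ N ^ 2 * S :=
    (sum_Icc_sq_le_of_eq_zero hz0 N).trans <| by
      gcongr
      exact sum_le_sum_of_subset_of_nonneg (range_subset_range.2 N.le_succ)
        fun _ _ _ ↦ sq_nonneg _
  have hrhs : h * ∑ j ∈ range (N + 1), ((z (j + 1) - z j) / h) ^ 2 = (N + 1) * S := by
    simp_rw [div_pow, ← sum_div, hh]
    field_simp
    rfl
  rw [hrhs, hh]
  calc 1 / (N + 1) * ∑ j ∈ Icc 1 N, z j ^ 2 ≤ 1 / (N + 1) * (N ^ 2 * S) := by gcongr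
    _ ≤ 4 * ((N + 1) * S) := by
        rw [div_mul_eq_mul_div, one_mul, div_le_iff₀ hN]
        nlinarith [mul_nonneg (sq_nonneg (N : ℝ)) hS]

theorem stmt16 (N : ℕ) (h : ℝ) (hh : h = 1 / (N + 1)) (z : ℕ → ℝ)
    (hz0 : z 0 = 0) (hzN : z (N + 1) = 0) :
    h * ∑ j ∈ Finset.Icc 1 N, (z j) ^ 2 ≤
      4 * (h * ∑ j ∈ Finset.range (N + 1), ((z (j + 1) - z j) / h) ^ 2) :=
  stmt16_general N h hh z hz0
end
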